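/- arXiv:1904.00161 — 7 statements merged into one kernel-verified Lean document; each statement's English description precedes it below -/
import Mathlib

section
/- Let f : G →* G' be a surjective group homomorphism, n ≥ 2, and K₁, …, Kₙ subgroups of G. Then the image under f of the n-fold Higgins commutator equals the n-fold Higgins commutator of the images: Subgroup.map f (H(K₁, …, Kₙ)) = H(Subgroup.map f K₁, …, Subgroup.map f Kₙ). -/
/-- The homomorphism on the free product `Monoid.CoprodI` of the subgroups `K i`
that is trivial on the `k`-th free factor and the canonical inclusion on every
other free factor. -/
def piHat {G : Type*} [Group G] {n : ℕ} (K : Fin n → Subgroup G) (k : Fin n) :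
    Monoid.CoprodI (fun i => ↥(K i)) →* Monoid.CoprodI (fun i => ↥(K i)) :=
  Monoid.CoprodI.lift
    (fun i => if i = k then 1 else Monoid.CoprodI.of (M := fun i => ↥(K i)) (i := i))

/-- The `n`-fold co-smash product `K₁ ◇ ⋯ ◇ Kₙ` of subgroups of `G`: the
intersection of the kernels of the homomorphisms `piHat K k`. -/
def cosmash {G : Type*} [Group G] {n : ℕ} (K : Fin n → Subgroup G) :
    Subgroup (Monoid.CoprodI (fun i => ↥(K i))) :=
  ⨅ k, (piHat K k).ker

/-- The `n`-fold Higgins commutator `H(K₁, …, Kₙ)` of subgroups of `G`: the image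
of the co-smash product under the homomorphism induced by the subgroup
inclusions. -/
def higgins {G : Type*} [Group G] {n : ℕ} (K : Fin n → Subgroup G) : Subgroup G :=
  (cosmash K).map (Monoid.CoprodI.lift (fun i => (K i).subtype))


section aux

variable {P P' : Type*} [Group P] [Group P']

/-- Lifting lemma: given a surjective `F` compatible with families of commuting
idempotent endomorphisms `e`, `e'`, any element killed by all `e' k`, `k ∈ L`,
lifts to an element killed by all `e k`, `k ∈ L`. -/
theorem exists_lift_of_forall_eq_one {ι : Type*} (F : P →* P') (hF : Function.Surjective F)
    (e : ι → (P →* P)) (e' : ι → (P' →* P'))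
    (hcomm : ∀ j k x, e j (e k x) = e k (e j x))
    (hidem : ∀ k x, e k (e k x) = e k x)
    (hcompat : ∀ k x, F (e k x) = e' k (F x)) :
    ∀ (L : List ι) (p' : P'), (∀ k ∈ L, e' k p' = 1) →
      ∃ q : P, F q = p' ∧ ∀ k ∈ L, e k q = 1 := by
  intro L
  induction L with
  | nil =>
    intro p' _
    obtain ⟨q, hq⟩ := hF p'
    exact ⟨q, hq, by simp⟩
  | cons k L ih =>
    intro p' hp'
    obtain ⟨q, hq, hq2⟩ := ih p' (fun j hj => hp' j (List.mem_cons_of_mem _ hj))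
    refine ⟨q * (e k q)⁻¹, ?_, ?_⟩
    · rw [map_mul, map_inv, hq, hcompat, hq, hp' k List.mem_cons_self, inv_one, mul_one]
    · intro j hj
      rcases List.mem_cons.mp hj with rfl | hj
      · rw [map_mul, map_inv, hidem, mul_inv_cancel]
      · rw [map_mul, map_inv, hcomm, hq2 j hj, map_one, inv_one, mul_one]

end aux

section maps

variable {G G' : Type*} [Group G] [Group G'] {n : ℕ}

/-- The induced map between free products of subgroups. -/
def coprodMap (f : G →* G') (K : Fin n → Subgroup G) :
    Monoid.CoprodI (fun i => ↥(K i)) →* Monoid.CoprodI (fun i => ↥((K i).map f)) :=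
  Monoid.CoprodI.lift (fun i =>
    (Monoid.CoprodI.of (M := fun i => ↥((K i).map f)) (i := i)).comp (f.subgroupMap (K i)))

theorem coprodMap_surjective (f : G →* G') (K : Fin n → Subgroup G) :
    Function.Surjective (coprodMap f K) := by
  intro p
  induction p using Monoid.CoprodI.induction_on with
  | one => exact ⟨1, map_one _⟩
  | of i m =>
    obtain ⟨x, hx⟩ := MonoidHom.subgroupMap_surjective f (K i) m
    exact ⟨Monoid.CoprodI.of x, by simp [coprodMap, hx]⟩
  | mul x y hx hy =>
    obtain ⟨a, ha⟩ := hx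
    obtain ⟨b, hb⟩ := hy
    exact ⟨a * b, by rw [map_mul, ha, hb]⟩

theorem piHat_apply_of (K : Fin n → Subgroup G) (k i : Fin n) (x : ↥(K i)) :
    piHat K k (Monoid.CoprodI.of x) =
      if i = k then 1 else Monoid.CoprodI.of (M := fun i => ↥(K i)) x := by
  rw [piHat, Monoid.CoprodI.lift_of]
  split_ifs with h <;> simp [h]

theorem piHat_comm (K : Fin n → Subgroup G) (j k : Fin n) (x : Monoid.CoprodI (fun i => ↥(K i))) :
    piHat K j (piHat K k x) = piHat K k (piHat K j x) := by
  have : (piHat K j).comp (piHat K k) = (piHat K k).comp (piHat K j) := by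
    apply Monoid.CoprodI.ext_hom
    intro i
    ext m
    simp only [MonoidHom.comp_apply, piHat_apply_of]
    split_ifs <;> simp [piHat_apply_of, *]
  exact DFunLike.congr_fun this x

theorem piHat_idem (K : Fin n → Subgroup G) (k : Fin n) (x : Monoid.CoprodI (fun i => ↥(K i))) :
    piHat K k (piHat K k x) = piHat K k x := by
  have : (piHat K k).comp (piHat K k) = piHat K k := by
    apply Monoid.CoprodI.ext_hom
    intro i
    ext m
    simp only [MonoidHom.comp_apply, piHat_apply_of]
    split_ifs <;> simp [piHat_apply_of, *]
  exact DFunLike.congr_fun this x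

theorem piHat_compat (f : G →* G') (K : Fin n → Subgroup G) (k : Fin n)
    (x : Monoid.CoprodI (fun i => ↥(K i))) :
    coprodMap f K (piHat K k x) = piHat (fun i => (K i).map f) k (coprodMap f K x) := by
  have : (coprodMap f K).comp (piHat K k)
      = (piHat (fun i => (K i).map f) k).comp (coprodMap f K) := by
    apply Monoid.CoprodI.ext_hom
    intro i
    ext m
    simp only [MonoidHom.comp_apply, piHat_apply_of, coprodMap, Monoid.CoprodI.lift_of]
    split_ifs <;> simp [piHat_apply_of, *]
  exact DFunLike.congr_fun this x

theorem kappa_compat (f : G →* G') (K : Fin n → Subgroup G)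
    (x : Monoid.CoprodI (fun i => ↥(K i))) :
    Monoid.CoprodI.lift (fun i => ((K i).map f).subtype) (coprodMap f K x)
      = f (Monoid.CoprodI.lift (fun i => (K i).subtype) x) := by
  have : (Monoid.CoprodI.lift (fun i => ((K i).map f).subtype)).comp (coprodMap f K)
      = f.comp (Monoid.CoprodI.lift (fun i => (K i).subtype)) := by
    apply Monoid.CoprodI.ext_hom
    intro i
    ext m
    simp only [MonoidHom.comp_apply, coprodMap, Monoid.CoprodI.lift_of, Monoid.CoprodI.lift_of, Subgroup.coe_subtype]
    rfl
  exact DFunLike.congr_fun this x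

theorem map_cosmash (f : G →* G') (hf : Function.Surjective f) (K : Fin n → Subgroup G) :
    (cosmash K).map (coprodMap f K) = cosmash (fun i => (K i).map f) := by
  apply le_antisymm
  · rintro _ ⟨x, hx, rfl⟩
    simp only [cosmash, SetLike.mem_coe, Subgroup.mem_iInf, MonoidHom.mem_ker] at hx ⊢
    intro k
    rw [← piHat_compat, hx k, map_one]
  · intro p hp
    rw [cosmash, Subgroup.mem_iInf] at hp
    obtain ⟨q, hq, hq2⟩ := exists_lift_of_forall_eq_one (coprodMap f K)
      (coprodMap_surjective f K) (piHat K) (piHat (fun i => (K i).map f))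
      (piHat_comm K) (piHat_idem K) (piHat_compat f K) (List.finRange n) p
      (fun k _ => hp k)
    refine ⟨q, ?_, hq⟩
    simp only [cosmash, SetLike.mem_coe, Subgroup.mem_iInf, MonoidHom.mem_ker]
    exact fun k => hq2 k (List.mem_finRange k)

end maps

/-- Surjective group homomorphisms preserve Higgins commutators: for `f : G →* G'`
surjective, `n ≥ 2` and subgroups `K₁, …, Kₙ` of `G`,
`f(H(K₁, …, Kₙ)) = H(f(K₁), …, f(Kₙ))`. -/
theorem map_higgins {G G' : Type*} [Group G] [Group G'] (f : G →* G')
    (hf : Function.Surjective f) {n : ℕ} (hn : 2 ≤ n) (K : Fin n → Subgroup G) :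
    (higgins K).map f = higgins (fun i => (K i).map f) := by
  rw [higgins, higgins, ← map_cosmash f hf K, Subgroup.map_map, Subgroup.map_map]
  congr 1
  apply Monoid.CoprodI.ext_hom
  intro i
  ext m
  exact (kappa_compat f K (Monoid.CoprodI.of m)).symm
end

section
/- Let n ≥ 2 and let K₁, …, Kₙ be subgroups of a group G. Then the left-nested iterated commutator subgroup is contained in the n-fold Higgins commutator: ⁅⋯⁅⁅K₁,K₂⁆,K₃⁆, …, Kₙ⁆ ≤ H(K₁, …, Kₙ). -/
/-- The left-nested iterated commutator subgroup `⁅⋯⁅⁅K₁,K₂⁆,K₃⁆, …, Kₙ⁆`. -/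
def nestedCommutator {G : Type*} [Group G] : {n : ℕ} → (Fin n → Subgroup G) → Subgroup G
  | 0, _ => ⊥
  | _ + 1, K => (List.ofFn fun i => K i.succ).foldl (fun A B => ⁅A, B⁆) (K 0)

section NestedCommutator

variable {G H : Type*} [Group G] [Group H]

theorem Subgroup.map_foldl_commutator (f : G →* H) :
    ∀ (l : List (Subgroup G)) (A : Subgroup G),
      (l.foldl (fun A B => ⁅A, B⁆) A).map f
        = (l.map (Subgroup.map f)).foldl (fun A B => ⁅A, B⁆) (A.map f)
  | [], _ => rfl
  | B :: l, A => by
    rw [List.foldl_cons, List.map_cons, List.foldl_cons, Subgroup.map_foldl_commutator f l,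
      Subgroup.map_commutator]

theorem Subgroup.foldl_commutator_bot :
    ∀ l : List (Subgroup G), l.foldl (fun A B => ⁅A, B⁆) ⊥ = ⊥
  | [] => rfl
  | B :: l => by
    rw [List.foldl_cons, Subgroup.commutator_bot_left, Subgroup.foldl_commutator_bot l]

theorem Subgroup.foldl_commutator_eq_bot_of_bot_mem :
    ∀ {l : List (Subgroup G)} (A : Subgroup G), ⊥ ∈ l → l.foldl (fun A B => ⁅A, B⁆) A = ⊥
  | [], _, h => absurd h List.not_mem_nil
  | B :: l, A, h => by
    rw [List.foldl_cons]
    rcases List.mem_cons.mp h with rfl | h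
    · rw [Subgroup.commutator_bot_right, Subgroup.foldl_commutator_bot]
    · exact Subgroup.foldl_commutator_eq_bot_of_bot_mem _ h

theorem map_nestedCommutator (f : G →* H) {n : ℕ} (K : Fin n → Subgroup G) :
    (nestedCommutator K).map f = nestedCommutator (fun i => (K i).map f) := by
  cases n with
  | zero => exact Subgroup.map_bot f
  | succ m =>
    rw [nestedCommutator, Subgroup.map_foldl_commutator, List.map_ofFn]
    rfl

theorem nestedCommutator_eq_bot_of_eq_bot {n : ℕ} (K : Fin n → Subgroup G) {k : Fin n}
    (hk : K k = ⊥) : nestedCommutator K = ⊥ := by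
  cases n with
  | zero => exact k.elim0
  | succ m =>
    rw [nestedCommutator]
    rcases Fin.eq_zero_or_eq_succ k with rfl | ⟨j, rfl⟩
    · rw [hk, Subgroup.foldl_commutator_bot]
    · exact Subgroup.foldl_commutator_eq_bot_of_bot_mem _ (List.mem_ofFn.mpr ⟨j, hk⟩)

end NestedCommutator

namespace Monoid.CoprodI

variable {ι : Type*} {M : ι → Type*} [∀ i, Group (M i)] {N : Type*} [Group N]

theorem map_lift_range_of (f : ∀ i, M i →* N) (i : ι) :
    (of : M i →* CoprodI M).range.map (lift f) = (f i).range := by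
  rw [MonoidHom.map_range, lift_comp_of]

end Monoid.CoprodI

section FreeFactor

variable {G : Type*} [Group G] {n : ℕ} (K : Fin n → Subgroup G)

abbrev freeFactor (i : Fin n) : Subgroup (Monoid.CoprodI (fun i => ↥(K i))) :=
  (Monoid.CoprodI.of (M := fun i => ↥(K i)) (i := i)).range

theorem map_lift_subtype_freeFactor (i : Fin n) :
    (freeFactor K i).map (Monoid.CoprodI.lift (fun i => (K i).subtype)) = K i := by
  rw [Monoid.CoprodI.map_lift_range_of, Subgroup.range_subtype]

theorem map_piHat_freeFactor_self (k : Fin n) : (freeFactor K k).map (piHat K k) = ⊥ := by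
  rw [piHat, Monoid.CoprodI.map_lift_range_of, if_pos rfl, MonoidHom.range_one]

theorem nestedCommutator_freeFactor_le_cosmash :
    nestedCommutator (freeFactor K) ≤ cosmash K :=
  le_iInf fun k => by
    rw [← Subgroup.map_eq_bot_iff, map_nestedCommutator]
    exact nestedCommutator_eq_bot_of_eq_bot _ (map_piHat_freeFactor_self K k)

end FreeFactor

theorem nested_le_higgins_general {G : Type*} [Group G] {n : ℕ}
    (K : Fin n → Subgroup G) :
    nestedCommutator K ≤ higgins K :=
  calc nestedCommutator K
      = (nestedCommutator (freeFactor K)).map (Monoid.CoprodI.lift fun i => (K i).subtype) := by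
        simp only [map_nestedCommutator, map_lift_subtype_freeFactor]
    _ ≤ higgins K := Subgroup.map_mono (nestedCommutator_freeFactor_le_cosmash K)

/-- For `n ≥ 2` and subgroups `K₁, …, Kₙ` of `G`, the left-nested iterated commutator
subgroup `⁅⋯⁅⁅K₁,K₂⁆,K₃⁆, …, Kₙ⁆` is contained in the `n`-fold Higgins commutator. -/
theorem nested_le_higgins {G : Type*} [Group G] {n : ℕ} (hn : 2 ≤ n)
    (K : Fin n → Subgroup G) :
    nestedCommutator K ≤ higgins K :=
  nested_le_higgins_general K
end

section
/- Let n ≥ 3 and let K₁, …, Kₙ be subgroups of a group G such that Kᵢ = K_{i+1} for some index 1 ≤ i < n. Then the n-fold Higgins commutator is contained in the (n−1)-fold Higgins commutator obtained by deleting one of the two equal adjacent entries: H(K₁, …, Kₙ) ≤ H(K₁, …, Kᵢ, K_{i+2}, …, Kₙ). -/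
/-!
Higgins commutators are monotone along surjective reindexings: if `σ` is surjective and
`K j ≤ L (σ j)`, the induced map of free products sends `K₁ ◇ ⋯ ◇ Kₘ` into `L₁ ◇ ⋯ ◇ Lₙ`,
because killing the factor `σ j` after the map kills in particular the image of the factor `j`.
Merging the two equal adjacent entries `i.castSucc`, `i.succ` via `i.predAbove` is such a
reindexing.
-/

open Monoid

section Higgins

variable {G : Type*} [Group G] {m n : ℕ}

lemma piHat_of_self (K : Fin n → Subgroup G) (k : Fin n) (x : K k) :
    piHat K k (CoprodI.of (M := fun i => K i) x) = 1 := by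
  simp [piHat]

lemma piHat_of_of_ne (K : Fin n → Subgroup G) {j k : Fin n} (hjk : j ≠ k) (x : K j) :
    piHat K k (CoprodI.of (M := fun i => K i) x) =
      CoprodI.of (M := fun i => K i) x := by
  simp [piHat, hjk]

def coprodIInclusion {K : Fin m → Subgroup G} {L : Fin n → Subgroup G} (σ : Fin m → Fin n)
    (hle : ∀ j, K j ≤ L (σ j)) : CoprodI (fun j => K j) →* CoprodI (fun k => L k) :=
  CoprodI.lift fun j => (CoprodI.of (i := σ j)).comp (Subgroup.inclusion (hle j))

variable {K : Fin m → Subgroup G} {L : Fin n → Subgroup G} {σ : Fin m → Fin n}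

@[simp]
lemma coprodIInclusion_of (hle : ∀ j, K j ≤ L (σ j)) (j : Fin m) (x : K j) :
    coprodIInclusion σ hle (CoprodI.of (M := fun i => K i) x) =
      CoprodI.of (M := fun k => L k) (Subgroup.inclusion (hle j) x) :=
  CoprodI.lift_of _ _

lemma piHat_comp_coprodIInclusion_comp_piHat (hle : ∀ j, K j ≤ L (σ j)) {j : Fin m} {k : Fin n}
    (hjk : σ j = k) :
    ((piHat L k).comp (coprodIInclusion σ hle)).comp (piHat K j) =
      (piHat L k).comp (coprodIInclusion σ hle) := by
  refine CoprodI.ext_hom _ _ fun j' => MonoidHom.ext fun x => ?_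
  by_cases hj' : j' = j
  · subst hj' hjk
    simp [piHat_of_self]
  · simp [piHat_of_of_ne K hj']

lemma map_cosmash_le_cosmash (hle : ∀ j, K j ≤ L (σ j)) (hσ : Function.Surjective σ) :
    (cosmash K).map (coprodIInclusion σ hle) ≤ cosmash L := by
  rintro _ ⟨x, hx, rfl⟩
  refine Subgroup.mem_iInf.mpr fun k => ?_
  obtain ⟨j, hjk⟩ := hσ k
  have hxj : piHat K j x = 1 := Subgroup.mem_iInf.mp hx j
  rw [MonoidHom.mem_ker, ← MonoidHom.comp_apply,
    ← piHat_comp_coprodIInclusion_comp_piHat hle hjk, MonoidHom.comp_apply, hxj, map_one]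

lemma lift_subtype_comp_coprodIInclusion (hle : ∀ j, K j ≤ L (σ j)) :
    (CoprodI.lift fun k => (L k).subtype).comp (coprodIInclusion σ hle) =
      CoprodI.lift fun j => (K j).subtype :=
  CoprodI.ext_hom _ _ fun j => MonoidHom.ext fun x => by simp

theorem higgins_le_higgins_of_surjective (hle : ∀ j, K j ≤ L (σ j))
    (hσ : Function.Surjective σ) :
    higgins K ≤ higgins L := by
  rw [higgins, ← lift_subtype_comp_coprodIInclusion hle, ← Subgroup.map_map]
  exact Subgroup.map_mono (map_cosmash_le_cosmash hle hσ)

end Higgins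

lemma le_removeNth_succ_predAbove {G : Type*} [Group G] {n : ℕ} {K : Fin (n + 1) → Subgroup G}
    {i : Fin n} (h : K i.castSucc = K i.succ) (m : Fin (n + 1)) :
    K m ≤ Fin.removeNth i.succ K (i.predAbove m) := by
  rw [Fin.removeNth_apply]
  by_cases hm : m = i.succ
  · subst hm
    rw [Fin.predAbove_succ_self, Fin.succAbove_succ_self, h]
  · rw [Fin.succ_succAbove_predAbove hm]

theorem higgins_le_higgins_removeNth_general {G : Type*} [Group G] {n : ℕ}
    (K : Fin (n + 1) → Subgroup G) (i : Fin n) (h : K i.castSucc = K i.succ) :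
    higgins K ≤ higgins (Fin.removeNth i.succ K) :=
  higgins_le_higgins_of_surjective (le_removeNth_succ_predAbove h)
    fun k => ⟨_, Fin.predAbove_succAbove i k⟩

/-- For `n + 1 ≥ 3` and subgroups `K₁, …, K_{n+1}` of `G` with two equal adjacent
entries `K i.castSucc = K i.succ`, the `(n+1)`-fold Higgins commutator is contained
in the `n`-fold Higgins commutator obtained by deleting one of the two equal
adjacent entries. -/
theorem higgins_le_higgins_removeNth {G : Type*} [Group G] {n : ℕ} (hn : 2 ≤ n)
    (K : Fin (n + 1) → Subgroup G) (i : Fin n) (h : K i.castSucc = K i.succ) :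
    higgins K ≤ higgins (Fin.removeNth i.succ K) :=
  higgins_le_higgins_removeNth_general K i h
end

section
/- Let X, Y, Z be groups. For a group W write X♭W for the kernel of the homomorphism W ∗ X →* X from the free product that is trivial on W and the identity on X. Then the homomorphism (X♭Y) ∗ (X♭Z) →* X♭(Y ∗ Z), whose restrictions to the two free factors are obtained by restricting to kernels the homomorphisms Y ∗ X →* (Y ∗ Z) ∗ X and Z ∗ X →* (Y ∗ Z) ∗ X induced by the coproduct inclusions Y ↪ Y ∗ Z and Z ↪ Y ∗ Z together with the identity on X, is surjective. -/
/-- `X♭W`: the kernel of the homomorphism `W ∗ X →* X` that is trivial on `W` and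
the identity on `X`. -/
def flat (X W : Type*) [Group X] [Group W] : Subgroup (Monoid.Coprod W X) :=
  MonoidHom.ker (Monoid.Coprod.lift (1 : W →* X) (MonoidHom.id X))

/-- The homomorphism `X♭Y →* X♭(Y ∗ Z)` obtained by restricting to kernels the
homomorphism `Y ∗ X →* (Y ∗ Z) ∗ X` induced by the coproduct inclusion
`Y ↪ Y ∗ Z` and the identity on `X`. -/
def flatInl (X Y Z : Type*) [Group X] [Group Y] [Group Z] :
    ↥(flat X Y) →* ↥(flat X (Monoid.Coprod Y Z)) :=
  MonoidHom.codRestrict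
    ((Monoid.Coprod.map (Monoid.Coprod.inl : Y →* Monoid.Coprod Y Z)
        (MonoidHom.id X)).domRestrict (flat X Y))
    (flat X (Monoid.Coprod Y Z))
    (fun w => by
      have key : (Monoid.Coprod.lift (1 : Monoid.Coprod Y Z →* X) (MonoidHom.id X)).comp
          (Monoid.Coprod.map (Monoid.Coprod.inl : Y →* Monoid.Coprod Y Z) (MonoidHom.id X)) =
          Monoid.Coprod.lift (1 : Y →* X) (MonoidHom.id X) := by
        apply Monoid.Coprod.hom_ext <;> ext x <;> simp
      have hw : (Monoid.Coprod.lift (1 : Y →* X) (MonoidHom.id X)) (w : Monoid.Coprod Y X) = 1 :=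
        w.2
      simp only [flat, MonoidHom.mem_ker, ← key] at hw ⊢
      exact hw)

/-- The homomorphism `X♭Z →* X♭(Y ∗ Z)` obtained by restricting to kernels the
homomorphism `Z ∗ X →* (Y ∗ Z) ∗ X` induced by the coproduct inclusion
`Z ↪ Y ∗ Z` and the identity on `X`. -/
def flatInr (X Y Z : Type*) [Group X] [Group Y] [Group Z] :
    ↥(flat X Z) →* ↥(flat X (Monoid.Coprod Y Z)) :=
  MonoidHom.codRestrict
    ((Monoid.Coprod.map (Monoid.Coprod.inr : Z →* Monoid.Coprod Y Z)
        (MonoidHom.id X)).domRestrict (flat X Z))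
    (flat X (Monoid.Coprod Y Z))
    (fun w => by
      have key : (Monoid.Coprod.lift (1 : Monoid.Coprod Y Z →* X) (MonoidHom.id X)).comp
          (Monoid.Coprod.map (Monoid.Coprod.inr : Z →* Monoid.Coprod Y Z) (MonoidHom.id X)) =
          Monoid.Coprod.lift (1 : Z →* X) (MonoidHom.id X) := by
        apply Monoid.Coprod.hom_ext <;> ext x <;> simp
      have hw : (Monoid.Coprod.lift (1 : Z →* X) (MonoidHom.id X)) (w : Monoid.Coprod Z X) = 1 :=
        w.2
      simp only [flat, MonoidHom.mem_ker, ← key] at hw ⊢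
      exact hw)

/-- **Algebraic coherence of the category of groups**: the canonical comparison
homomorphism `(X♭Y) ∗ (X♭Z) →* X♭(Y ∗ Z)` is surjective. -/
theorem flat_comparison_surjective (X Y Z : Type*) [Group X] [Group Y] [Group Z] :
    Function.Surjective (Monoid.Coprod.lift (flatInl X Y Z) (flatInr X Y Z)) := by
  set φ := Monoid.Coprod.lift (flatInl X Y Z) (flatInr X Y Z) with hφ
  set ψ := (flat X (Monoid.Coprod Y Z)).subtype.comp φ with hψ
  set T := ψ.range with hT
  set r := Monoid.Coprod.lift (1 : Monoid.Coprod Y Z →* X) (MonoidHom.id X) with hr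
  set mapl := Monoid.Coprod.map (Monoid.Coprod.inl : Y →* Monoid.Coprod Y Z) (MonoidHom.id X)
    with hmapl
  set mapr := Monoid.Coprod.map (Monoid.Coprod.inr : Z →* Monoid.Coprod Y Z) (MonoidHom.id X)
    with hmapr
  -- computation lemmas
  have hψl : ∀ k : flat X Y, ψ (Monoid.Coprod.inl k) = mapl (k : Monoid.Coprod Y X) :=
    fun k => rfl
  have hψr : ∀ k : flat X Z, ψ (Monoid.Coprod.inr k) = mapr (k : Monoid.Coprod Z X) :=
    fun k => rfl
  have hnl : (flat X Y).Normal := MonoidHom.normal_ker _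
  have hnr : (flat X Z).Normal := MonoidHom.normal_ker _
  -- conjugation by inr x preserves T
  have hconj : ∀ (x : X) (t : Monoid.Coprod (Monoid.Coprod Y Z) X), t ∈ T →
      Monoid.Coprod.inr x * t * (Monoid.Coprod.inr x)⁻¹ ∈ T := by
    intro x t ht
    obtain ⟨p, rfl⟩ := ht
    induction p using Monoid.Coprod.induction_on with
    | inl k =>
        refine ⟨Monoid.Coprod.inl
          ⟨Monoid.Coprod.inr x * (k : Monoid.Coprod Y X) * (Monoid.Coprod.inr x)⁻¹,
            hnl.conj_mem _ k.2 _⟩, ?_⟩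
        rw [hψl, hψl]
        simp [hmapl]
    | inr k =>
        refine ⟨Monoid.Coprod.inr
          ⟨Monoid.Coprod.inr x * (k : Monoid.Coprod Z X) * (Monoid.Coprod.inr x)⁻¹,
            hnr.conj_mem _ k.2 _⟩, ?_⟩
        rw [hψr, hψr]
        simp [hmapr]
    | mul a b ha hb =>
        rw [map_mul]
        have : Monoid.Coprod.inr x * (ψ a * ψ b) * (Monoid.Coprod.inr x)⁻¹
            = (Monoid.Coprod.inr x * ψ a * (Monoid.Coprod.inr x)⁻¹)
              * (Monoid.Coprod.inr x * ψ b * (Monoid.Coprod.inr x)⁻¹) := by group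
        rw [this]; exact mul_mem ha hb
  -- inl g ∈ T for all g
  have hinl : ∀ g : Monoid.Coprod Y Z,
      (Monoid.Coprod.inl g : Monoid.Coprod (Monoid.Coprod Y Z) X) ∈ T := by
    intro g
    induction g using Monoid.Coprod.induction_on with
    | inl y =>
        refine ⟨Monoid.Coprod.inl ⟨Monoid.Coprod.inl y, ?_⟩, ?_⟩
        · simp [flat, MonoidHom.mem_ker]
        · rw [hψl]; simp [hmapl]
    | inr z =>
        refine ⟨Monoid.Coprod.inr ⟨Monoid.Coprod.inl z, ?_⟩, ?_⟩
        · simp [flat, MonoidHom.mem_ker]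
        · rw [hψr]; simp [hmapr]
    | mul a b ha hb =>
        rw [map_mul]; exact mul_mem ha hb
  -- main claim
  have main : ∀ m : Monoid.Coprod (Monoid.Coprod Y Z) X,
      m * Monoid.Coprod.inr (r m)⁻¹ ∈ T := by
    intro m
    induction m using Monoid.Coprod.induction_on with
    | inl g => simpa [hr] using hinl g
    | inr x => simpa [hr] using one_mem T
    | mul a b ha hb =>
        have key : a * b * Monoid.Coprod.inr (r (a * b))⁻¹
            = (a * Monoid.Coprod.inr (r a)⁻¹)
              * (Monoid.Coprod.inr (r a) * (b * Monoid.Coprod.inr (r b)⁻¹)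
                * (Monoid.Coprod.inr (r a))⁻¹) := by
          simp only [map_mul, map_inv, mul_inv_rev]; group
        rw [key]
        exact mul_mem ha (hconj _ _ hb)
  -- conclude
  rintro ⟨m, hm⟩
  have hm' : r m = 1 := hm
  have : m ∈ T := by simpa [hm'] using main m
  obtain ⟨p, hp⟩ := this
  exact ⟨p, Subtype.ext hp⟩
end

section
/- Let G be a group and K a subgroup of G. Let G♭K denote the kernel of the homomorphism K ∗ G →* G from the free product that is trivial on K and the identity on G, and let φ : K ∗ G →* G be the homomorphism whose restriction to K is the subgroup inclusion K ↪ G and whose restriction to G is the identity. Then the image Subgroup.map φ (G♭K) equals the normal closure of K in G. -/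
/-!
Write `φ = lift K.subtype id` and `ψ = lift 1 id`. The two maps agree modulo the normal
closure `N` of `K`, so `φ` sends `ker ψ` into `N`. Conversely `φ` is surjective (it restricts
to the identity on `G`), so `φ (ker ψ)` is normal; it contains `φ (inl k) = k` for every
`k ∈ K`, hence contains `N`.
-/

open Monoid

theorem Subgroup.map_ker_le_of_mk'_comp_eq {A G : Type*} [Group A] [Group G]
    {N : Subgroup G} [N.Normal] {f g : A →* G}
    (h : (QuotientGroup.mk' N).comp f = (QuotientGroup.mk' N).comp g) :
    g.ker.map f ≤ N := by
  rw [Subgroup.map_le_iff_le_comap, ← QuotientGroup.ker_mk' N, MonoidHom.comap_ker, h]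
  intro x hx
  rw [MonoidHom.mem_ker, MonoidHom.comp_apply, MonoidHom.mem_ker.mp hx, map_one]

theorem Monoid.Coprod.lift_surjective_of_surjective_right {M N P : Type*} [Monoid M]
    [Monoid N] [Monoid P] (f : M →* P) {g : N →* P} (hg : Function.Surjective g) :
    Function.Surjective (Coprod.lift f g) := fun p =>
  (hg p).elim fun n hn => ⟨Coprod.inr n, by rw [Coprod.lift_apply_inr, hn]⟩

/-- For a subgroup `K` of `G`, the image under
`φ = Monoid.Coprod.lift K.subtype (MonoidHom.id G) : K ∗ G →* G` of
`G♭K = ker(Monoid.Coprod.lift 1 (MonoidHom.id G) : K ∗ G →* G)` is the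
normal closure of `K` in `G`. -/
theorem map_flat_eq_normalClosure {G : Type*} [Group G] (K : Subgroup G) :
    Subgroup.map (Monoid.Coprod.lift K.subtype (MonoidHom.id G))
      (MonoidHom.ker (Monoid.Coprod.lift (1 : ↥K →* G) (MonoidHom.id G))) =
      Subgroup.normalClosure (K : Set G) := by
  set φ := Coprod.lift K.subtype (MonoidHom.id G)
  set ψ := Coprod.lift (1 : ↥K →* G) (MonoidHom.id G)
  have hφψ : (QuotientGroup.mk' (Subgroup.normalClosure (K : Set G))).comp φ =
      (QuotientGroup.mk' _).comp ψ := by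
    refine Coprod.hom_ext (MonoidHom.ext fun k => ?_) rfl
    simpa [φ, ψ, QuotientGroup.eq_one_iff] using Subgroup.subset_normalClosure k.2
  have : (ψ.ker.map φ).Normal :=
    ψ.normal_ker.map φ (Coprod.lift_surjective_of_surjective_right _ Function.surjective_id)
  refine le_antisymm (Subgroup.map_ker_le_of_mk'_comp_eq hφψ)
    (Subgroup.normalClosure_le_normal fun k hk => ?_)
  exact ⟨Coprod.inl ⟨k, hk⟩, by simp [ψ], by simp [φ]⟩
end

section
/- Let f : A →* B and g : C →* D be surjective group homomorphisms, and let p : A →* C and q : B →* D be group homomorphisms admitting sections s : C →* A and t : D →* B (p ∘ s = id, q ∘ t = id) such that g ∘ p = q ∘ f and f ∘ s = t ∘ g. Then the comparison homomorphism from A to the pullback {(b,c) ∈ B × C | q b = g c}, sending a to (f a, p a), is surjective. -/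
/-!
Since `p` is split by `s`, every element of `A` is `k * s c` with `k ∈ ker p`. An element
`(b, c)` of the pullback is reached by `k * s c` as soon as `f k = b * (f (s c))⁻¹`, which lies
in `ker q`; so it suffices that `f` maps `ker p` onto `ker q`. For `k ∈ ker q` with `f a = k`,
the element `a * (s (p a))⁻¹` lies in `ker p` and is sent to `k * (t (q k))⁻¹ = k` by the
commutation `f ∘ s = t ∘ g`.
-/

namespace MonoidHom

variable {A B C D : Type*} [Group A] [Group B] [Group C] [Group D]
  {f : A →* B} {g : C →* D} {p : A →* C} {q : B →* D} {s : C →* A}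

theorem ker_le_map_ker_of_split {t : D →* B} (hf : Function.Surjective f)
    (hps : p.comp s = MonoidHom.id C) (hsq : g.comp p = q.comp f) (hst : f.comp s = t.comp g) :
    q.ker ≤ p.ker.map f := by
  intro k hk
  obtain ⟨a, rfl⟩ := hf k
  have hsp : f (s (p a)) = 1 := by
    rw [← comp_apply f s, hst, comp_apply, ← comp_apply g p, hsq, comp_apply, mem_ker.mp hk,
      map_one]
  refine Subgroup.mem_map.mpr ⟨a * (s (p a))⁻¹, ?_, ?_⟩
  · rw [mem_ker, map_mul, map_inv, ← comp_apply p s, hps, id_apply, mul_inv_cancel]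
  · rw [map_mul, map_inv, hsp, inv_one, mul_one]

theorem exists_eq_and_eq_of_ker_le_map_ker (hps : p.comp s = MonoidHom.id C)
    (hsq : g.comp p = q.comp f) (hker : q.ker ≤ p.ker.map f) {b : B} {c : C} (h : q b = g c) :
    ∃ a, f a = b ∧ p a = c := by
  have hpsc : p (s c) = c := DFunLike.congr_fun hps c
  have hk : b * (f (s c))⁻¹ ∈ q.ker := by
    rw [mem_ker, map_mul, map_inv, ← comp_apply q f, ← hsq, comp_apply, hpsc, h, mul_inv_cancel]
  obtain ⟨k, hk, hfk⟩ := hker hk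
  refine ⟨k * s c, ?_, ?_⟩
  · rw [map_mul, hfk, inv_mul_cancel_right]
  · rw [map_mul, mem_ker.mp hk, hpsc, one_mul]

end MonoidHom

theorem split_epi_between_extensions_is_double_extension_general
    {A B C D : Type*} [Group A] [Group B] [Group C] [Group D]
    (f : A →* B) (g : C →* D) (p : A →* C) (q : B →* D) (s : C →* A) (t : D →* B)
    (hf : Function.Surjective f)
    (hps : p.comp s = MonoidHom.id C)
    (hsq : g.comp p = q.comp f) (hst : f.comp s = t.comp g) :
    Function.Surjective
      (fun a : A => (⟨(f a, p a), (DFunLike.congr_fun hsq a).symm⟩ :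
        {x : B × C // q x.1 = g x.2})) := by
  rintro ⟨⟨b, c⟩, h⟩
  obtain ⟨a, hfa, hpa⟩ := MonoidHom.exists_eq_and_eq_of_ker_le_map_ker hps hsq
    (MonoidHom.ker_le_map_ker_of_split hf hps hsq hst) h
  exact ⟨a, Subtype.ext (Prod.ext hfa hpa)⟩

/-- A split epimorphism between extensions of groups is a double extension: given
surjective `f : A →* B` and `g : C →* D`, homomorphisms `p : A →* C`, `q : B →* D`
with sections `s`, `t` making the square and its section-square commute, the
comparison map `a ↦ (f a, p a)` from `A` to the pullback `{(b,c) | q b = g c}`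
is surjective. -/
theorem split_epi_between_extensions_is_double_extension
    {A B C D : Type*} [Group A] [Group B] [Group C] [Group D]
    (f : A →* B) (g : C →* D) (p : A →* C) (q : B →* D) (s : C →* A) (t : D →* B)
    (hf : Function.Surjective f) (hg : Function.Surjective g)
    (hps : p.comp s = MonoidHom.id C) (hqt : q.comp t = MonoidHom.id D)
    (hsq : g.comp p = q.comp f) (hst : f.comp s = t.comp g) :
    Function.Surjective
      (fun a : A => (⟨(f a, p a), (DFunLike.congr_fun hsq a).symm⟩ :
        {x : B × C // q x.1 = g x.2})) :=
  split_epi_between_extensions_is_double_extension_general f g p q s t hf hps hsq hst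
end

section
/- Let R be a commutative ring, L a Lie algebra over R, and I, J, K Lie ideals of L. Then ⁅⁅J,K⁆, I⁆ ≤ ⁅⁅I,J⁆, K⁆ ⊔ ⁅⁅K,I⁆, J⁆ as Lie ideals (Lie submodules) of L. -/
/-!
The elements `x` with `⁅x, N⁆ ⊆ P` form a Lie ideal, so to bound `⁅⁅J, K⁆, N⁆` it suffices to
treat the generators `⁅j, k⁆` of `⁅J, K⁆`, where the Jacobi identity
`⁅⁅j, k⁆, m⁆ = ⁅j, ⁅k, m⁆⁆ - ⁅k, ⁅j, m⁆⁆` places the bracket in `⁅J, ⁅K, N⁆⁆ ⊔ ⁅K, ⁅J, N⁆⁆`.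
Taking `N = I` in the adjoint module and using antisymmetry of the bracket of ideals gives the theorem.
-/

namespace LieSubmodule

variable {R L M : Type*} [CommRing R] [LieRing L] [LieAlgebra R L]
  [AddCommGroup M] [Module R M] [LieRingModule L M] [LieModule R L M]

def colon (N P : LieSubmodule R L M) : LieIdeal R L where
  carrier := {x | ∀ m ∈ N, ⁅x, m⁆ ∈ P}
  add_mem' hx hy m hm := by rw [add_lie]; exact P.add_mem (hx m hm) (hy m hm)
  zero_mem' m _ := by rw [zero_lie]; exact P.zero_mem
  smul_mem' t x hx m hm := by rw [smul_lie]; exact P.smul_mem t (hx m hm)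
  lie_mem {z x} hx m hm := by
    rw [lie_lie]
    exact P.sub_mem (P.lie_mem (hx m hm)) (hx _ (N.lie_mem hm))

theorem lie_le_iff_le_colon {I : LieIdeal R L} {N P : LieSubmodule R L M} :
    ⁅I, N⁆ ≤ P ↔ I ≤ colon N P := by
  rw [lie_le_iff]
  rfl

theorem lie_lie_le_sup (J K : LieIdeal R L) (N : LieSubmodule R L M) :
    ⁅⁅J, K⁆, N⁆ ≤ ⁅J, ⁅K, N⁆⁆ ⊔ ⁅K, ⁅J, N⁆⁆ := by
  rw [lie_le_iff_le_colon, lie_le_iff]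
  intro j hj k hk m hm
  rw [lie_lie]
  exact sub_mem (mem_sup_left (lie_mem_lie hj (lie_mem_lie hk hm)))
    (mem_sup_right (lie_mem_lie hk (lie_mem_lie hj hm)))

end LieSubmodule

/-- **The Three Subobjects Lemma for Lie algebras** (inclusion part): for Lie ideals
`I, J, K` of a Lie algebra `L` over a commutative ring `R`,
`⁅⁅J,K⁆, I⁆ ≤ ⁅⁅I,J⁆, K⁆ ⊔ ⁅⁅K,I⁆, J⁆`. -/
theorem lie_three_subobjects {R L : Type*} [CommRing R] [LieRing L] [LieAlgebra R L]
    (I J K : LieIdeal R L) :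
    ⁅⁅J, K⁆, I⁆ ≤ ⁅⁅I, J⁆, K⁆ ⊔ ⁅⁅K, I⁆, J⁆ := by
  rw [LieSubmodule.lie_comm ⁅I, J⁆ K, LieSubmodule.lie_comm ⁅K, I⁆ J, sup_comm,
    LieSubmodule.lie_comm I J]
  exact LieSubmodule.lie_lie_le_sup J K I
end
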